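/- Let G be a group, u : G → ℝ a nonzero homomorphism, and A a square matrix over the Novikov ring Z[G]_u all of whose entries have support in {u > 0}. Then I + A is invertible in M_n(Z[G]_u), with inverse Σ_{k≥0} (−A)^k. -/
import Mathlib

open scoped Classical

/-- The Novikov condition defining `ℤ[G]_u`. -/
def NovCond {G : Type*} [Group G] (u : G → ℝ) (f : G → ℤ) : Prop :=
  ∀ C : ℝ, {g : G | f g ≠ 0 ∧ u g ≤ C}.Finite

/-- Convolution product of formal series on `G`. -/
noncomputable def conv {G : Type*} [Group G] (f g : G → ℤ) : G → ℤ :=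
  fun k => ∑ᶠ p : G × G, if p.1 * p.2 = k then f p.1 * g p.2 else 0

/-- The series `1`. -/
noncomputable def oneF {G : Type*} [Group G] : G → ℤ :=
  fun g => if g = 1 then 1 else 0

/-- Product of matrices with entries in the ring of formal series on `G`. -/
noncomputable def matConv {G : Type*} [Group G] {n : ℕ}
    (A B : Matrix (Fin n) (Fin n) (G → ℤ)) : Matrix (Fin n) (Fin n) (G → ℤ) :=
  fun i j => ∑ k : Fin n, conv (A i k) (B k j)

/-- The identity matrix over the ring of formal series on `G`. -/
noncomputable def idMat {G : Type*} [Group G] (n : ℕ) : Matrix (Fin n) (Fin n) (G → ℤ) :=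
  fun i j => if i = j then oneF else 0

/-- Powers of a matrix of formal series. -/
noncomputable def matPow {G : Type*} [Group G] {n : ℕ}
    (A : Matrix (Fin n) (Fin n) (G → ℤ)) : ℕ → Matrix (Fin n) (Fin n) (G → ℤ)
  | 0 => idMat n
  | m + 1 => matConv (matPow A m) A

set_option linter.unusedSectionVars false
section basic

variable {G : Type*} [Group G] {u : G → ℝ}

/-- Novikov condition together with nonnegative support. -/
def Pnn (u : G → ℝ) (f : G → ℤ) : Prop :=
  NovCond u f ∧ ∀ g, f g ≠ 0 → 0 ≤ u g

theorem conv_eq_sum (f h : G → ℤ) (k : G) (T : Finset G)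
    (hT : ∀ a, f a ≠ 0 → h (a⁻¹ * k) ≠ 0 → a ∈ T) :
    conv f h k = ∑ a ∈ T, f a * h (a⁻¹ * k) := by
  have hsupp : (Function.support fun p : G × G => if p.1 * p.2 = k then f p.1 * h p.2 else 0)
      ⊆ ↑(T.image fun a => (a, a⁻¹ * k)) := by
    rintro ⟨x, y⟩ hp
    simp only [Function.mem_support] at hp
    have hxy : x * y = k := by by_contra hc; simp [hc] at hp
    rw [if_pos hxy] at hp
    have hy : y = x⁻¹ * k := by rw [← hxy]; group
    have hfx : f x ≠ 0 := left_ne_zero_of_mul hp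
    have hhy : h (x⁻¹ * k) ≠ 0 := by rw [← hy]; exact right_ne_zero_of_mul hp
    simp only [Finset.coe_image, Set.mem_image, Finset.mem_coe]
    exact ⟨x, hT x hfx hhy, by rw [← hy]⟩
  rw [conv, finsum_eq_finset_sum_of_support_subset _ hsupp,
    Finset.sum_image (fun a _ b _ hab => congrArg Prod.fst hab)]
  apply Finset.sum_congr rfl
  intro a _
  rw [if_pos (by group)]

theorem conv_ne_zero_imp {f h : G → ℤ} {k : G} (hne : conv f h k ≠ 0) :
    ∃ a, f a ≠ 0 ∧ h (a⁻¹ * k) ≠ 0 := by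
  by_contra hc
  push_neg at hc
  apply hne
  rw [conv_eq_sum f h k ∅ (fun a ha hb => absurd (hc a ha) hb)]
  simp

theorem zero_conv (h : G → ℤ) (k : G) : conv 0 h k = 0 := by
  rw [conv_eq_sum 0 h k ∅ (fun a ha _ => absurd rfl ha)]; simp

theorem conv_zero (f : G → ℤ) (k : G) : conv f 0 k = 0 := by
  rw [conv_eq_sum f 0 k ∅ (fun a _ hb => absurd rfl hb)]; simp

theorem oneF_conv (f : G → ℤ) (k : G) : conv oneF f k = f k := by
  rw [conv_eq_sum oneF f k {1} (fun a ha _ => by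
    simp only [oneF, ne_eq, ite_eq_right_iff, not_forall] at ha
    simp [ha.1])]
  simp [oneF]

theorem conv_oneF (f : G → ℤ) (k : G) : conv f oneF k = f k := by
  rw [conv_eq_sum f oneF k {k} (fun a _ hb => by
    simp only [oneF, ne_eq, ite_eq_right_iff, not_forall] at hb
    have : a = k := by
      have := hb.1; rw [inv_mul_eq_one] at this; exact this
    simp [this])]
  simp [oneF]

variable (hu : ∀ a b : G, u (a * b) = u a + u b)
include hu

theorem u_one : u 1 = 0 := by have := hu 1 1; simp at this; linarith

theorem u_inv_mul (a k : G) : u (a⁻¹ * k) = u k - u a := by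
  have h1 := hu a (a⁻¹ * k)
  rw [mul_inv_cancel_left] at h1
  linarith


omit hu

noncomputable def Tof {f : G → ℤ} (hf : NovCond u f) (C : ℝ) : Finset G := (hf C).toFinset

theorem mem_Tof {f : G → ℤ} (hf : NovCond u f) {C : ℝ} {g : G} :
    g ∈ Tof hf C ↔ f g ≠ 0 ∧ u g ≤ C := Set.Finite.mem_toFinset _

include hu

theorem Tof_works {f h : G → ℤ} (hf : NovCond u f) (hh : ∀ g, h g ≠ 0 → 0 ≤ u g) (k : G) :
    ∀ a, f a ≠ 0 → h (a⁻¹ * k) ≠ 0 → a ∈ Tof hf (u k) := by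
  intro a ha hb
  rw [mem_Tof]
  refine ⟨ha, ?_⟩
  have := hh _ hb
  rw [u_inv_mul hu] at this
  linarith

theorem Pnn.conv {f h : G → ℤ} (hf : Pnn u f) (hh : Pnn u h) : Pnn u (conv f h) := by
  constructor
  · intro C
    apply Set.Finite.subset (((Tof hf.1 C) ×ˢ (Tof hh.1 C)).image fun p => p.1 * p.2).finite_toSet
    rintro k ⟨hk, hkC⟩
    obtain ⟨a, ha, hb⟩ := conv_ne_zero_imp hk
    have h1 : 0 ≤ u a := hf.2 _ ha
    have h2 : 0 ≤ u (a⁻¹ * k) := hh.2 _ hb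
    rw [u_inv_mul hu] at h2
    simp only [Finset.coe_image, Set.mem_image, Finset.mem_coe, Finset.mem_product]
    exact ⟨(a, a⁻¹ * k), ⟨(mem_Tof hf.1).2 ⟨ha, by linarith⟩,
      (mem_Tof hh.1).2 ⟨hb, by rw [u_inv_mul hu]; linarith⟩⟩, by group⟩
  · intro k hk
    obtain ⟨a, ha, hb⟩ := conv_ne_zero_imp hk
    have h1 : 0 ≤ u a := hf.2 _ ha
    have h2 : 0 ≤ u (a⁻¹ * k) := hh.2 _ hb
    rw [u_inv_mul hu] at h2
    linarith

omit hu

theorem Pnn.add {f h : G → ℤ} (hf : Pnn u f) (hh : Pnn u h) :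
    Pnn u (fun x => f x + h x) := by
  constructor
  · intro C
    apply Set.Finite.subset ((hf.1 C).union (hh.1 C))
    rintro g ⟨hg, hgC⟩
    by_cases h1 : f g ≠ 0
    · exact Or.inl ⟨h1, hgC⟩
    · push_neg at h1
      exact Or.inr ⟨fun h2 => hg (by simp [h1, h2]), hgC⟩
  · intro g hg
    by_cases h1 : f g ≠ 0
    · exact hf.2 _ h1
    · push_neg at h1
      exact hh.2 _ (fun h2 => hg (by simp [h1, h2]))

theorem Pnn.zero : Pnn u (fun _ => (0 : ℤ)) := by
  refine ⟨fun C => ?_, fun g hg => absurd rfl hg⟩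
  convert Set.finite_empty using 1
  ext g; simp

theorem Pnn.smul {f : G → ℤ} (hf : Pnn u f) (c : ℤ) : Pnn u (fun x => c * f x) := by
  constructor
  · intro C
    apply Set.Finite.subset (hf.1 C)
    rintro g ⟨hg, hgC⟩
    exact ⟨fun h => hg (by simp [h]), hgC⟩
  · intro g hg
    exact hf.2 _ (fun h => hg (by simp [h]))

theorem Pnn.finsetSum {ι : Type*} (s : Finset ι) {F : ι → G → ℤ}
    (hF : ∀ l ∈ s, Pnn u (F l)) : Pnn u (fun x => ∑ l ∈ s, F l x) := by
  classical
  induction s using Finset.induction with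
  | empty => simpa using (Pnn.zero (u := u))
  | @insert a s ha ih =>
      have h1 : Pnn u (fun x => F a x + ∑ l ∈ s, F l x) :=
        (hF a (Finset.mem_insert_self a s)).add
          (ih (fun l hl => hF l (Finset.mem_insert_of_mem hl)))
      simpa [Finset.sum_insert ha] using h1

include hu

theorem conv_add_right {f h h' : G → ℤ} (hf : Pnn u f)
    (hh : ∀ g, h g ≠ 0 → 0 ≤ u g) (hh' : ∀ g, h' g ≠ 0 → 0 ≤ u g) (k : G) :
    conv f (fun x => h x + h' x) k = conv f h k + conv f h' k := by
  have hs : ∀ g, h g + h' g ≠ 0 → 0 ≤ u g := by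
    intro g hg
    by_cases h1 : h g ≠ 0
    · exact hh _ h1
    · push_neg at h1; exact hh' _ (fun h2 => hg (by simp [h1, h2]))
  rw [conv_eq_sum _ _ k _ (Tof_works hu hf.1 hs k),
      conv_eq_sum f h k _ (Tof_works hu hf.1 hh k),
      conv_eq_sum f h' k _ (Tof_works hu hf.1 hh' k), ← Finset.sum_add_distrib]
  exact Finset.sum_congr rfl (fun a _ => by ring)

theorem conv_add_left {f f' h : G → ℤ} (hf : Pnn u f) (hf' : Pnn u f')
    (hh : ∀ g, h g ≠ 0 → 0 ≤ u g) (k : G) :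
    conv (fun x => f x + f' x) h k = conv f h k + conv f' h k := by
  have hs : Pnn u (fun x => f x + f' x) := hf.add hf'
  set T := Tof hf.1 (u k) ∪ Tof hf'.1 (u k) with hT
  have w1 : ∀ a, f a ≠ 0 → h (a⁻¹ * k) ≠ 0 → a ∈ T :=
    fun a ha hb => Finset.mem_union_left _ (Tof_works hu hf.1 hh k a ha hb)
  have w2 : ∀ a, f' a ≠ 0 → h (a⁻¹ * k) ≠ 0 → a ∈ T :=
    fun a ha hb => Finset.mem_union_right _ (Tof_works hu hf'.1 hh k a ha hb)
  have w3 : ∀ a, f a + f' a ≠ 0 → h (a⁻¹ * k) ≠ 0 → a ∈ T := by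
    intro a ha hb
    by_cases h1 : f a ≠ 0
    · exact w1 a h1 hb
    · push_neg at h1
      exact w2 a (fun h2 => ha (by simp [h1, h2])) hb
  rw [conv_eq_sum _ _ k T w3, conv_eq_sum f h k T w1, conv_eq_sum f' h k T w2,
    ← Finset.sum_add_distrib]
  exact Finset.sum_congr rfl (fun a _ => by ring)

theorem conv_smul_right {f h : G → ℤ} (hf : Pnn u f)
    (hh : ∀ g, h g ≠ 0 → 0 ≤ u g) (c : ℤ) (k : G) :
    conv f (fun x => c * h x) k = c * conv f h k := by
  have hs : ∀ g, c * h g ≠ 0 → 0 ≤ u g := fun g hg => hh _ (fun h2 => hg (by simp [h2]))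
  rw [conv_eq_sum _ _ k _ (Tof_works hu hf.1 hs k),
      conv_eq_sum f h k _ (Tof_works hu hf.1 hh k), Finset.mul_sum]
  exact Finset.sum_congr rfl (fun a _ => by ring)

theorem conv_smul_left {f h : G → ℤ} (hf : Pnn u f)
    (hh : ∀ g, h g ≠ 0 → 0 ≤ u g) (c : ℤ) (k : G) :
    conv (fun x => c * f x) h k = c * conv f h k := by
  have hs : NovCond u (fun x => c * f x) := (hf.smul c).1
  set T := Tof hf.1 (u k) with hT
  have w1 : ∀ a, f a ≠ 0 → h (a⁻¹ * k) ≠ 0 → a ∈ T := Tof_works hu hf.1 hh k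
  have w2 : ∀ a, c * f a ≠ 0 → h (a⁻¹ * k) ≠ 0 → a ∈ T :=
    fun a ha hb => w1 a (fun h2 => ha (by simp [h2])) hb
  rw [conv_eq_sum _ _ k T w2, conv_eq_sum f h k T w1, Finset.mul_sum]
  exact Finset.sum_congr rfl (fun a _ => by ring)

theorem conv_sum_right {ι : Type*} (s : Finset ι) {f : G → ℤ} {H : ι → G → ℤ}
    (hf : Pnn u f) (hH : ∀ l ∈ s, ∀ g, H l g ≠ 0 → 0 ≤ u g) (k : G) :
    conv f (fun x => ∑ l ∈ s, H l x) k = ∑ l ∈ s, conv f (H l) k := by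
  have hs : ∀ g, (∑ l ∈ s, H l g) ≠ 0 → 0 ≤ u g := by
    intro g hg
    obtain ⟨l, hl, hne⟩ : ∃ l ∈ s, H l g ≠ 0 := by
      by_contra hc; push_neg at hc
      exact hg (Finset.sum_eq_zero hc)
    exact hH l hl g hne
  rw [conv_eq_sum _ _ k _ (Tof_works hu hf.1 hs k)]
  have : ∀ l ∈ s, conv f (H l) k = ∑ a ∈ Tof hf.1 (u k), f a * H l (a⁻¹ * k) := by
    intro l hl
    exact conv_eq_sum f (H l) k _ (Tof_works hu hf.1 (hH l hl) k)
  rw [Finset.sum_congr rfl this, Finset.sum_comm]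
  exact Finset.sum_congr rfl (fun a _ => by rw [Finset.mul_sum])

theorem conv_sum_left {ι : Type*} (s : Finset ι) {f : G → ℤ} {H : ι → G → ℤ}
    (hf : ∀ g, f g ≠ 0 → 0 ≤ u g) (hH : ∀ l ∈ s, Pnn u (H l)) (k : G) :
    conv (fun x => ∑ l ∈ s, H l x) f k = ∑ l ∈ s, conv (H l) f k := by
  classical
  set T := s.biUnion (fun l => if hl : l ∈ s then Tof (hH l hl).1 (u k) else ∅) with hT
  have w1 : ∀ l ∈ s, ∀ a, H l a ≠ 0 → f (a⁻¹ * k) ≠ 0 → a ∈ T := by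
    intro l hl a ha hb
    apply Finset.mem_biUnion.2 ⟨l, hl, ?_⟩
    rw [dif_pos hl]
    exact Tof_works hu (hH l hl).1 hf k a ha hb
  have w2 : ∀ a, (∑ l ∈ s, H l a) ≠ 0 → f (a⁻¹ * k) ≠ 0 → a ∈ T := by
    intro a ha hb
    obtain ⟨l, hl, hne⟩ : ∃ l ∈ s, H l a ≠ 0 := by
      by_contra hc; push_neg at hc
      exact ha (Finset.sum_eq_zero hc)
    exact w1 l hl a hne hb
  rw [conv_eq_sum _ _ k T w2]
  have : ∀ l ∈ s, conv (H l) f k = ∑ a ∈ T, H l a * f (a⁻¹ * k) := by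
    intro l hl
    exact conv_eq_sum (H l) f k T (w1 l hl)
  rw [Finset.sum_congr rfl this, Finset.sum_comm]
  exact Finset.sum_congr rfl (fun a _ => by rw [Finset.sum_mul])


theorem conv_congr_right {f h h' : G → ℤ} (hf : Pnn u f) (hh : Pnn u h) (hh' : Pnn u h')
    (k : G) (agree : ∀ g, u g ≤ u k → h g = h' g) :
    conv f h k = conv f h' k := by
  rw [conv_eq_sum f h k _ (Tof_works hu hf.1 hh.2 k),
      conv_eq_sum f h' k _ (Tof_works hu hf.1 hh'.2 k)]
  apply Finset.sum_congr rfl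
  intro a ha
  rw [mem_Tof] at ha
  have h1 : 0 ≤ u a := hf.2 _ ha.1
  have h2 : u (a⁻¹ * k) ≤ u k := by rw [u_inv_mul hu]; linarith
  rw [agree _ h2]

theorem conv_congr_left {f f' h : G → ℤ} (hf : Pnn u f) (hf' : Pnn u f') (hh : Pnn u h)
    (k : G) (agree : ∀ g, u g ≤ u k → f g = f' g) :
    conv f h k = conv f' h k := by
  set T := Tof hf.1 (u k) ∪ Tof hf'.1 (u k) with hT
  have w1 : ∀ a, f a ≠ 0 → h (a⁻¹ * k) ≠ 0 → a ∈ T :=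
    fun a ha hb => Finset.mem_union_left _ (Tof_works hu hf.1 hh.2 k a ha hb)
  have w2 : ∀ a, f' a ≠ 0 → h (a⁻¹ * k) ≠ 0 → a ∈ T :=
    fun a ha hb => Finset.mem_union_right _ (Tof_works hu hf'.1 hh.2 k a ha hb)
  rw [conv_eq_sum f h k T w1, conv_eq_sum f' h k T w2]
  apply Finset.sum_congr rfl
  intro a _
  by_cases hb : h (a⁻¹ * k) = 0
  · rw [hb]; ring
  · have h1 : 0 ≤ u (a⁻¹ * k) := hh.2 _ hb
    have h2 : u a ≤ u k := by rw [u_inv_mul hu] at h1; linarith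
    rw [agree _ h2]

theorem conv_assoc {f g h : G → ℤ} (hf : Pnn u f) (hg : Pnn u g) (hh : Pnn u h) (k : G) :
    conv (conv f g) h k = conv f (conv g h) k := by
  have hfg : Pnn u (conv f g) := Pnn.conv hu hf hg
  have hgh : Pnn u (conv g h) := Pnn.conv hu hg hh
  set C := max (u k) 0 with hC
  have hCk : u k ≤ C := le_max_left _ _
  have hC0 : (0:ℝ) ≤ C := le_max_right _ _
  set Sf1 := Tof hf.1 C with hSf1
  set Sg1 := Tof hg.1 C with hSg1
  set Sf2 := Tof hf.1 (2*C) with hSf2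
  set T1 := ((Sf1 ×ˢ Sg1).image fun p => p.1 * p.2) ∪ Tof hfg.1 C with hT1
  have uT1 : ∀ a ∈ T1, u a ≤ 2*C := by
    intro a ha
    rcases Finset.mem_union.1 ha with h1 | h1
    · obtain ⟨p, hp, rfl⟩ := Finset.mem_image.1 h1
      rw [Finset.mem_product] at hp
      have hb := (mem_Tof hf.1).1 hp.1
      have hc := (mem_Tof hg.1).1 hp.2
      rw [hu]; linarith [hb.2, hc.2]
    · have := (mem_Tof hfg.1).1 h1
      linarith [this.2]
  -- LHS
  have L1 : conv (conv f g) h k = ∑ a ∈ T1, conv f g a * h (a⁻¹ * k) := by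
    apply conv_eq_sum
    intro a ha hb
    have h2 : 0 ≤ u (a⁻¹ * k) := hh.2 _ hb
    rw [u_inv_mul hu] at h2
    exact Finset.mem_union_right _ ((mem_Tof hfg.1).2 ⟨ha, by linarith⟩)
  have L2 : ∀ a ∈ T1, conv f g a = ∑ b ∈ Sf2, f b * g (b⁻¹ * a) := by
    intro a ha
    apply conv_eq_sum
    intro b hb hc
    have h2 : 0 ≤ u (b⁻¹ * a) := hg.2 _ hc
    rw [u_inv_mul hu] at h2
    exact (mem_Tof hf.1).2 ⟨hb, by linarith [uT1 a ha]⟩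
  -- RHS
  have R1 : conv f (conv g h) k = ∑ b ∈ Sf1, f b * conv g h (b⁻¹ * k) := by
    apply conv_eq_sum
    intro b hb hc
    have h2 : 0 ≤ u (b⁻¹ * k) := hgh.2 _ hc
    rw [u_inv_mul hu] at h2
    exact (mem_Tof hf.1).2 ⟨hb, by linarith⟩
  have R2 : ∀ b ∈ Sf1, conv g h (b⁻¹ * k) =
      ∑ a ∈ T1, g (b⁻¹ * a) * h (a⁻¹ * k) := by
    intro b hb
    have hbm := (mem_Tof hf.1).1 hb
    have hb0 : 0 ≤ u b := hf.2 _ hbm.1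
    have step : conv g h (b⁻¹ * k) =
        ∑ c ∈ T1.image (fun a => b⁻¹ * a), g c * h (c⁻¹ * (b⁻¹ * k)) := by
      apply conv_eq_sum
      intro c hc hd
      have h2 : 0 ≤ u (c⁻¹ * (b⁻¹ * k)) := hh.2 _ hd
      rw [u_inv_mul hu, u_inv_mul hu] at h2
      have hcC : u c ≤ C := by linarith
      have : b * c ∈ T1 := by
        apply Finset.mem_union_left
        apply Finset.mem_image.2
        exact ⟨(b, c), Finset.mem_product.2 ⟨hb, (mem_Tof hg.1).2 ⟨hc, hcC⟩⟩, rfl⟩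
      exact Finset.mem_image.2 ⟨b * c, this, by group⟩
    rw [step, Finset.sum_image (fun x _ y _ hxy => mul_left_cancel hxy)]
    apply Finset.sum_congr rfl
    intro a _
    congr 1
    congr 1
    group
  have hsub : Sf1 ⊆ Sf2 := by
    intro b hb
    have := (mem_Tof hf.1).1 hb
    exact (mem_Tof hf.1).2 ⟨this.1, by linarith [this.2]⟩
  have hzero : ∀ b ∈ Sf2, b ∉ Sf1 →
      (∑ a ∈ T1, f b * (g (b⁻¹ * a) * h (a⁻¹ * k))) = 0 := by
    intro b hb2 hb1
    have hbm := (mem_Tof hf.1).1 hb2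
    have hbC : C < u b := by
      by_contra hc
      push_neg at hc
      exact hb1 ((mem_Tof hf.1).2 ⟨hbm.1, hc⟩)
    apply Finset.sum_eq_zero
    intro a _
    by_cases h1 : g (b⁻¹ * a) = 0
    · rw [h1]; ring
    by_cases h2 : h (a⁻¹ * k) = 0
    · rw [h2]; ring
    exfalso
    have e1 : 0 ≤ u (b⁻¹ * a) := hg.2 _ h1
    have e2 : 0 ≤ u (a⁻¹ * k) := hh.2 _ h2
    rw [u_inv_mul hu] at e1 e2
    linarith
  calc conv (conv f g) h k
      = ∑ a ∈ T1, conv f g a * h (a⁻¹ * k) := L1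
    _ = ∑ a ∈ T1, (∑ b ∈ Sf2, f b * g (b⁻¹ * a)) * h (a⁻¹ * k) :=
        Finset.sum_congr rfl (fun a ha => by rw [L2 a ha])
    _ = ∑ a ∈ T1, ∑ b ∈ Sf2, f b * (g (b⁻¹ * a) * h (a⁻¹ * k)) :=
        Finset.sum_congr rfl (fun a _ => by
          rw [Finset.sum_mul]
          exact Finset.sum_congr rfl (fun b _ => by ring))
    _ = ∑ b ∈ Sf2, ∑ a ∈ T1, f b * (g (b⁻¹ * a) * h (a⁻¹ * k)) := Finset.sum_comm
    _ = ∑ b ∈ Sf1, ∑ a ∈ T1, f b * (g (b⁻¹ * a) * h (a⁻¹ * k)) :=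
        (Finset.sum_subset hsub (fun b hb2 hb1 => hzero b hb2 hb1)).symm
    _ = ∑ b ∈ Sf1, f b * conv g h (b⁻¹ * k) :=
        Finset.sum_congr rfl (fun b hb => by rw [R2 b hb, Finset.mul_sum])
    _ = conv f (conv g h) k := R1.symm

end basic

section matrixlevel
variable {G : Type*} [Group G] {u : G → ℝ} {n : ℕ}

theorem matConv_apply (X Y : Matrix (Fin n) (Fin n) (G → ℤ)) (i j : Fin n) (g : G) :
    matConv X Y i j g = ∑ l : Fin n, conv (X i l) (Y l j) g := by
  simp [matConv]

variable (hu : ∀ a b : G, u (a * b) = u a + u b)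
include hu

theorem Pnn_oneF : Pnn u (oneF : G → ℤ) := by
  constructor
  · intro C
    apply Set.Finite.subset (Set.finite_singleton (1 : G))
    rintro g ⟨hg, -⟩
    have : g = 1 := by
      by_contra hc; simp [oneF, hc] at hg
    simp [this]
  · intro g hg
    have : g = 1 := by
      by_contra hc; simp [oneF, hc] at hg
    rw [this, u_one hu]

theorem idMat_Pnn (i j : Fin n) : Pnn u (idMat n i j : G → ℤ) := by
  unfold idMat
  by_cases h : i = j
  · rw [if_pos h]; exact Pnn_oneF hu
  · rw [if_neg h]; exact Pnn.zero

theorem matConv_Pnn {X Y : Matrix (Fin n) (Fin n) (G → ℤ)}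
    (hX : ∀ i j, Pnn u (X i j)) (hY : ∀ i j, Pnn u (Y i j)) (i j : Fin n) :
    Pnn u (matConv X Y i j) := by
  have h1 : matConv X Y i j = fun g => ∑ l : Fin n, conv (X i l) (Y l j) g :=
    funext fun g => matConv_apply X Y i j g
  rw [h1]
  exact Pnn.finsetSum _ (fun l _ => Pnn.conv hu (hX i l) (hY l j))

theorem matPow_Pnn {A : Matrix (Fin n) (Fin n) (G → ℤ)}
    (hA : ∀ i j, Pnn u (A i j)) : ∀ m i j, Pnn u (matPow A m i j) := by
  intro m
  induction m with
  | zero => exact fun i j => idMat_Pnn hu i j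
  | succ m ih => exact fun i j => matConv_Pnn hu ih hA i j

omit hu in
theorem matConv_id_right (X : Matrix (Fin n) (Fin n) (G → ℤ)) :
    matConv X (idMat n) = X := by
  funext i j g
  rw [matConv_apply]
  rw [Finset.sum_eq_single j]
  · unfold idMat; rw [if_pos rfl, conv_oneF]
  · intro l _ hl
    unfold idMat; rw [if_neg hl, conv_zero]
  · intro hj; exact absurd (Finset.mem_univ j) hj

omit hu in
theorem matConv_id_left (X : Matrix (Fin n) (Fin n) (G → ℤ)) :
    matConv (idMat n) X = X := by
  funext i j g
  rw [matConv_apply]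
  rw [Finset.sum_eq_single i]
  · unfold idMat; rw [if_pos rfl, oneF_conv]
  · intro l _ hl
    unfold idMat; rw [if_neg (fun h => hl h.symm), zero_conv]
  · intro hj; exact absurd (Finset.mem_univ i) hj

theorem matConv_assoc {X Y Z : Matrix (Fin n) (Fin n) (G → ℤ)}
    (hX : ∀ i j, Pnn u (X i j)) (hY : ∀ i j, Pnn u (Y i j)) (hZ : ∀ i j, Pnn u (Z i j)) :
    matConv (matConv X Y) Z = matConv X (matConv Y Z) := by
  funext i j g
  rw [matConv_apply, matConv_apply]
  calc ∑ l : Fin n, conv (matConv X Y i l) (Z l j) g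
      = ∑ l : Fin n, ∑ l' : Fin n, conv (conv (X i l') (Y l' l)) (Z l j) g := by
        apply Finset.sum_congr rfl
        intro l _
        have h1 : matConv X Y i l = fun x => ∑ l' : Fin n, conv (X i l') (Y l' l) x :=
          funext fun x => matConv_apply X Y i l x
        rw [h1]
        exact conv_sum_left hu _ (hZ l j).2 (fun l' _ => Pnn.conv hu (hX i l') (hY l' l)) g
    _ = ∑ l : Fin n, ∑ l' : Fin n, conv (X i l') (conv (Y l' l) (Z l j)) g := by
        apply Finset.sum_congr rfl; intro l _
        apply Finset.sum_congr rfl; intro l' _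
        exact conv_assoc hu (hX i l') (hY l' l) (hZ l j) g
    _ = ∑ l' : Fin n, ∑ l : Fin n, conv (X i l') (conv (Y l' l) (Z l j)) g :=
        Finset.sum_comm
    _ = ∑ l' : Fin n, conv (X i l') (matConv Y Z l' j) g := by
        apply Finset.sum_congr rfl
        intro l' _
        have h1 : matConv Y Z l' j = fun x => ∑ l : Fin n, conv (Y l' l) (Z l j) x :=
          funext fun x => matConv_apply Y Z l' j x
        rw [h1]
        exact (conv_sum_right hu _ (hX i l')
          (fun l _ => (Pnn.conv hu (hY l' l) (hZ l j)).2) g).symm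

theorem matPow_succ_left {A : Matrix (Fin n) (Fin n) (G → ℤ)}
    (hA : ∀ i j, Pnn u (A i j)) (m : ℕ) :
    matConv A (matPow A m) = matPow A (m + 1) := by
  induction m with
  | zero =>
      show matConv A (idMat n) = matConv (idMat n) A
      rw [matConv_id_right, matConv_id_left]
  | succ m ih =>
      have h1 : matPow A (m+1+1) = matConv (matPow A (m+1)) A := rfl
      have h2 : matPow A (m+1) = matConv (matPow A m) A := rfl
      rw [h1, h2, ← matConv_assoc hu hA (matPow_Pnn hu hA m) hA, ih, h2]

end matrixlevel

section growth
variable {G : Type*} [Group G] {u : G → ℝ} {n : ℕ}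
variable (hu : ∀ a b : G, u (a * b) = u a + u b)
include hu

theorem matPow_growth {A : Matrix (Fin n) (Fin n) (G → ℤ)}
    (hA : ∀ i j, NovCond u (A i j))
    (hsupp : ∀ i j (g : G), A i j g ≠ 0 → 0 < u g) (C : ℝ) :
    ∃ N : ℕ, ∀ m, N ≤ m → ∀ i j g, u g ≤ C → matPow A m i j g = 0 := by
  have hApnn : ∀ i j, Pnn u (A i j) :=
    fun i j => ⟨hA i j, fun g hg => le_of_lt (hsupp i j g hg)⟩
  have hPow := matPow_Pnn hu hApnn
  set SA : Set G := {g | (∃ i j, A i j g ≠ 0) ∧ u g ≤ C} with hSA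
  have hfin : SA.Finite := by
    apply Set.Finite.subset (Set.finite_iUnion
      (fun p : Fin n × Fin n => hA p.1 p.2 C))
    rintro g ⟨⟨i, j, hg⟩, hgC⟩
    exact Set.mem_iUnion.2 ⟨(i, j), hg, hgC⟩
  obtain ⟨ε, hε0, hεle⟩ : ∃ ε : ℝ, 0 < ε ∧ ∀ x ∈ SA, ε ≤ u x := by
    by_cases hne : (hfin.toFinset.image u).Nonempty
    · refine ⟨(hfin.toFinset.image u).min' hne, ?_, ?_⟩
      · obtain ⟨x, hx, hmin⟩ := Finset.mem_image.1 ((hfin.toFinset.image u).min'_mem hne)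
        rw [Set.Finite.mem_toFinset] at hx
        obtain ⟨⟨i, j, hx1⟩, -⟩ := hx
        rw [← hmin]
        exact hsupp i j x hx1
      · intro x hx
        exact Finset.min'_le _ _ (Finset.mem_image.2 ⟨x, (Set.Finite.mem_toFinset _).2 hx, rfl⟩)
    · refine ⟨1, one_pos, fun x hx => absurd ?_ hne⟩
      exact ⟨u x, Finset.mem_image.2 ⟨x, (Set.Finite.mem_toFinset _).2 hx, rfl⟩⟩
  have claim : ∀ m (i j : Fin n) (g : G), matPow A m i j g ≠ 0 →
      C < u g ∨ (m : ℝ) * ε ≤ u g := by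
    intro m
    induction m with
    | zero =>
        intro i j g hg
        right
        by_cases hc : g = 1
        · rw [hc, u_one hu]; simp
        · exfalso
          apply hg
          show idMat n i j g = 0
          unfold idMat
          by_cases h1 : i = j
          · rw [if_pos h1]
            show oneF g = 0
            unfold oneF
            rw [if_neg hc]
          · rw [if_neg h1]
            rfl
    | succ m ih =>
        intro i j g hg
        have hg' : matConv (matPow A m) A i j g ≠ 0 := hg
        rw [matConv_apply] at hg'
        obtain ⟨l, -, hl⟩ := Finset.exists_ne_zero_of_sum_ne_zero hg'
        obtain ⟨a, ha, hb⟩ := conv_ne_zero_imp hl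
        have hpos : 0 < u (a⁻¹ * g) := hsupp l j _ hb
        have ha0 : 0 ≤ u a := (hPow m i l).2 _ ha
        have hiv : u (a⁻¹ * g) = u g - u a := u_inv_mul hu a g
        rcases ih i l a ha with h1 | h1
        · left; linarith
        · by_cases h2 : u g ≤ C
          · right
            have hmem : a⁻¹ * g ∈ SA := ⟨⟨l, j, hb⟩, by linarith⟩
            have := hεle _ hmem
            push_cast
            linarith
          · left; linarith
  obtain ⟨N, hN⟩ := exists_nat_gt (C / ε)
  refine ⟨N, fun m hm i j g hgC => ?_⟩
  by_contra hne
  have hCN : C < (N : ℝ) * ε := by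
    rw [div_lt_iff₀ hε0] at hN
    exact hN
  have hNm : (N : ℝ) * ε ≤ (m : ℝ) * ε := by
    apply mul_le_mul_of_nonneg_right _ (le_of_lt hε0)
    exact_mod_cast hm
  rcases claim m i j g hne with h1 | h1 <;> linarith

end growth

section mainthm
variable {G : Type*} [Group G] {u : G → ℝ} {n : ℕ}

theorem tele {A : Matrix (Fin n) (Fin n) (G → ℤ)} (i j : Fin n) (k : G) (N : ℕ)
    (h1 : (∑ᶠ m : ℕ, (-1) ^ m * matPow A m i j k)
      = ∑ m ∈ Finset.range (N + 1), (-1) ^ m * matPow A m i j k) :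
    (∑ᶠ m : ℕ, (-1) ^ m * matPow A m i j k)
      + ∑ m ∈ Finset.range N, (-1) ^ m * matPow A (m + 1) i j k = idMat n i j k := by
  rw [h1, Finset.sum_range_succ']
  have hzero : (∑ m ∈ Finset.range N, (-1 : ℤ) ^ (m + 1) * matPow A (m + 1) i j k)
      + ∑ m ∈ Finset.range N, (-1 : ℤ) ^ m * matPow A (m + 1) i j k = 0 := by
    rw [← Finset.sum_add_distrib]
    apply Finset.sum_eq_zero
    intro m _
    rw [pow_succ]
    ring
  have e : matPow A 0 i j k = idMat n i j k := rfl
  rw [e]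
  simp only [pow_zero, one_mul]
  linarith [hzero]

end mainthm

theorem stmt5 (G : Type*) [Group G] (u : G → ℝ)
    (hu : ∀ a b : G, u (a * b) = u a + u b) (hu0 : u ≠ 0)
    (n : ℕ) (A : Matrix (Fin n) (Fin n) (G → ℤ))
    (hA : ∀ i j, NovCond u (A i j))
    (hsupp : ∀ i j (g : G), A i j g ≠ 0 → 0 < u g) :
    -- the series `Σ_{k ≥ 0} (-A)^k` makes sense entrywise
    (∀ i j (g : G), {m : ℕ | matPow A m i j g ≠ 0}.Finite) ∧
    -- its entries lie in the Novikov ring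
    (∀ i j, NovCond u (fun g => ∑ᶠ m : ℕ, (-1) ^ m * matPow A m i j g)) ∧
    -- `I + A` is invertible with inverse `Σ_{k ≥ 0} (-A)^k`
    matConv (idMat n + A) (fun i j g => ∑ᶠ m : ℕ, (-1) ^ m * matPow A m i j g) = idMat n ∧
    matConv (fun i j g => ∑ᶠ m : ℕ, (-1) ^ m * matPow A m i j g) (idMat n + A) = idMat n := by
  have hApnn : ∀ i j, Pnn u (A i j) :=
    fun i j => ⟨hA i j, fun g hg => le_of_lt (hsupp i j g hg)⟩
  have hPow := matPow_Pnn hu hApnn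
  have growth := matPow_growth hu hA hsupp
  set S : Matrix (Fin n) (Fin n) (G → ℤ) :=
    fun i j g => ∑ᶠ m : ℕ, (-1) ^ m * matPow A m i j g with hSdef
  -- part 1
  have part1 : ∀ i j (g : G), {m : ℕ | matPow A m i j g ≠ 0}.Finite := by
    intro i j g
    obtain ⟨N, hN⟩ := growth (u g)
    apply Set.Finite.subset (Set.finite_Iio N)
    intro m hm
    simp only [Set.mem_setOf_eq] at hm
    simp only [Set.mem_Iio]
    by_contra hc
    push_neg at hc
    exact hm (hN m hc i j g le_rfl)
  -- truncation
  have htr : ∀ (C : ℝ) (N : ℕ), (∀ m, N ≤ m → ∀ i j (g : G), u g ≤ C → matPow A m i j g = 0) →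
      ∀ i j (g : G), u g ≤ C →
        S i j g = ∑ m ∈ Finset.range N, (-1) ^ m * matPow A m i j g := by
    intro C N hN i j g hg
    apply finsum_eq_finset_sum_of_support_subset
    intro m hm
    simp only [Function.mem_support] at hm
    simp only [Finset.coe_range, Set.mem_Iio]
    by_contra hc
    push_neg at hc
    rw [hN m hc i j g hg] at hm
    simp at hm
  -- S entries lie in the Novikov ring, with nonneg support
  have hSne : ∀ i j (g : G), S i j g ≠ 0 → ∃ m, matPow A m i j g ≠ 0 := by
    intro i j g hg
    by_contra hc
    push_neg at hc
    exact hg (finsum_eq_zero_of_forall_eq_zero (fun m => by rw [hc m]; ring))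
  have hSpnn : ∀ i j, Pnn u (S i j) := by
    intro i j
    constructor
    · intro C
      obtain ⟨N, hN⟩ := growth C
      apply Set.Finite.subset (Set.Finite.biUnion (Set.finite_Iio N)
        (fun m _ => (hPow m i j).1 C))
      rintro g ⟨hg, hgC⟩
      obtain ⟨m, hm⟩ := hSne i j g hg
      have hmN : m < N := by
        by_contra hc
        push_neg at hc
        exact hm (hN m hc i j g hgC)
      exact Set.mem_biUnion hmN ⟨hm, hgC⟩
    · intro g hg
      obtain ⟨m, hm⟩ := hSne i j g hg
      exact (hPow m i j).2 _ hm
  refine ⟨part1, fun i j => (hSpnn i j).1, ?_, ?_⟩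
  · -- (I + A) * S = I
    funext i j k
    obtain ⟨N, hN⟩ := growth (u k)
    set SN : Fin n → Fin n → G → ℤ :=
      fun a b g => ∑ m ∈ Finset.range N, (-1) ^ m * matPow A m a b g with hSNdef
    have hSNpnn : ∀ a b, Pnn u (SN a b) :=
      fun a b => Pnn.finsetSum _ (fun m _ => Pnn.smul (hPow m a b) ((-1) ^ m))
    have agree : ∀ a b (g : G), u g ≤ u k → S a b g = SN a b g :=
      fun a b g hg => htr (u k) N hN a b g hg
    have key : ∀ l, conv (A i l) (S l j) k
        = ∑ m ∈ Finset.range N, (-1) ^ m * conv (A i l) (matPow A m l j) k := by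
      intro l
      calc conv (A i l) (S l j) k = conv (A i l) (SN l j) k :=
            conv_congr_right hu (hApnn i l) (hSpnn l j) (hSNpnn l j) k (agree l j)
        _ = ∑ m ∈ Finset.range N, conv (A i l) (fun x => (-1) ^ m * matPow A m l j x) k :=
            conv_sum_right hu (Finset.range N) (hApnn i l)
              (fun m _ => (Pnn.smul (hPow m l j) ((-1) ^ m)).2) k
        _ = ∑ m ∈ Finset.range N, (-1) ^ m * conv (A i l) (matPow A m l j) k :=
            Finset.sum_congr rfl (fun m _ =>
              conv_smul_right hu (hApnn i l) (hPow m l j).2 ((-1) ^ m) k)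
    calc matConv (idMat n + A) S i j k
        = ∑ l : Fin n, conv (((idMat n + A : Matrix (Fin n) (Fin n) (G → ℤ))) i l) (S l j) k := matConv_apply _ _ i j k
      _ = ∑ l : Fin n, (conv (idMat n i l) (S l j) k + conv (A i l) (S l j) k) := by
          refine Finset.sum_congr rfl (fun l _ => ?_)
          exact conv_add_left hu (idMat_Pnn hu i l) (hApnn i l) (hSpnn l j).2 k
      _ = (∑ l : Fin n, conv (idMat n i l) (S l j) k)
            + ∑ l : Fin n, conv (A i l) (S l j) k := Finset.sum_add_distrib
      _ = S i j k + ∑ l : Fin n, conv (A i l) (S l j) k := by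
          congr 1
          rw [Finset.sum_eq_single i]
          · show conv (idMat n i i) (S i j) k = S i j k
            unfold idMat
            rw [if_pos rfl, oneF_conv]
          · intro l _ hl
            show conv (idMat n i l) (S l j) k = 0
            unfold idMat
            rw [if_neg (fun h => hl h.symm), zero_conv]
          · intro hi; exact absurd (Finset.mem_univ i) hi
      _ = S i j k + ∑ l : Fin n,
            ∑ m ∈ Finset.range N, (-1) ^ m * conv (A i l) (matPow A m l j) k := by
          rw [Finset.sum_congr rfl (fun l _ => key l)]
      _ = S i j k + ∑ m ∈ Finset.range N,
            (-1) ^ m * ∑ l : Fin n, conv (A i l) (matPow A m l j) k := by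
          congr 1
          rw [Finset.sum_comm]
          exact Finset.sum_congr rfl (fun m _ => (Finset.mul_sum _ _ _).symm)
      _ = S i j k + ∑ m ∈ Finset.range N, (-1) ^ m * matPow A (m + 1) i j k := by
          congr 1
          refine Finset.sum_congr rfl (fun m _ => ?_)
          congr 1
          calc ∑ l : Fin n, conv (A i l) (matPow A m l j) k
              = matConv A (matPow A m) i j k := (matConv_apply _ _ i j k).symm
            _ = matPow A (m + 1) i j k := by rw [matPow_succ_left hu hApnn m]
      _ = idMat n i j k := by
          apply tele i j k N
          apply htr (u k) (N + 1) (fun m hm => hN m (le_trans (Nat.le_succ N) hm)) i j k le_rfl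
  · -- S * (I + A) = I
    funext i j k
    obtain ⟨N, hN⟩ := growth (u k)
    set SN : Fin n → Fin n → G → ℤ :=
      fun a b g => ∑ m ∈ Finset.range N, (-1) ^ m * matPow A m a b g with hSNdef
    have hSNpnn : ∀ a b, Pnn u (SN a b) :=
      fun a b => Pnn.finsetSum _ (fun m _ => Pnn.smul (hPow m a b) ((-1) ^ m))
    have agree : ∀ a b (g : G), u g ≤ u k → S a b g = SN a b g :=
      fun a b g hg => htr (u k) N hN a b g hg
    have key : ∀ l, conv (S i l) (A l j) k
        = ∑ m ∈ Finset.range N, (-1) ^ m * conv (matPow A m i l) (A l j) k := by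
      intro l
      calc conv (S i l) (A l j) k = conv (SN i l) (A l j) k :=
            conv_congr_left hu (hSpnn i l) (hSNpnn i l) (hApnn l j) k (agree i l)
        _ = ∑ m ∈ Finset.range N, conv (fun x => (-1) ^ m * matPow A m i l x) (A l j) k :=
            conv_sum_left hu (Finset.range N) (hApnn l j).2
              (fun m _ => Pnn.smul (hPow m i l) ((-1) ^ m)) k
        _ = ∑ m ∈ Finset.range N, (-1) ^ m * conv (matPow A m i l) (A l j) k :=
            Finset.sum_congr rfl (fun m _ =>
              conv_smul_left hu (hPow m i l) (hApnn l j).2 ((-1) ^ m) k)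
    calc matConv S (idMat n + A) i j k
        = ∑ l : Fin n, conv (S i l) (((idMat n + A : Matrix (Fin n) (Fin n) (G → ℤ))) l j) k := matConv_apply _ _ i j k
      _ = ∑ l : Fin n, (conv (S i l) (idMat n l j) k + conv (S i l) (A l j) k) := by
          refine Finset.sum_congr rfl (fun l _ => ?_)
          exact conv_add_right hu (hSpnn i l) (idMat_Pnn hu l j).2 (hApnn l j).2 k
      _ = (∑ l : Fin n, conv (S i l) (idMat n l j) k)
            + ∑ l : Fin n, conv (S i l) (A l j) k := Finset.sum_add_distrib
      _ = S i j k + ∑ l : Fin n, conv (S i l) (A l j) k := by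
          congr 1
          rw [Finset.sum_eq_single j]
          · show conv (S i j) (idMat n j j) k = S i j k
            unfold idMat
            rw [if_pos rfl, conv_oneF]
          · intro l _ hl
            show conv (S i l) (idMat n l j) k = 0
            unfold idMat
            rw [if_neg hl, conv_zero]
          · intro hj; exact absurd (Finset.mem_univ j) hj
      _ = S i j k + ∑ l : Fin n,
            ∑ m ∈ Finset.range N, (-1) ^ m * conv (matPow A m i l) (A l j) k := by
          rw [Finset.sum_congr rfl (fun l _ => key l)]
      _ = S i j k + ∑ m ∈ Finset.range N,
            (-1) ^ m * ∑ l : Fin n, conv (matPow A m i l) (A l j) k := by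
          congr 1
          rw [Finset.sum_comm]
          exact Finset.sum_congr rfl (fun m _ => (Finset.mul_sum _ _ _).symm)
      _ = S i j k + ∑ m ∈ Finset.range N, (-1) ^ m * matPow A (m + 1) i j k := by
          congr 1
          refine Finset.sum_congr rfl (fun m _ => ?_)
          congr 1
          exact (matConv_apply (matPow A m) A i j k).symm
      _ = idMat n i j k := by
          apply tele i j k N
          apply htr (u k) (N + 1) (fun m hm => hN m (le_trans (Nat.le_succ N) hm)) i j k le_rfl
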